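/- arXiv:2508.17190 — 6 statements merged into one kernel-verified Lean document; each statement's English description precedes it below -/
import Mathlib

section
/- There exists a unitary U on (ℂ²)^{⊗5} implementing a classical reversible function (a permutation of computational basis states) such that U fixes the computational-basis value of the third qubit a on every basis state |x1,x2,y,x3,x4⟩ (i.e., the third output bit always equals y), yet U is not of the form V ⊗ I_a for any unitary V on the other four qubits. A witness is the product of three Toffoli gates: Toffoli on (q1,q2,a), then Toffoli on (a,q3,q4), then Toffoli on (q1,q2,a). -/
open Matrix Kronecker

/-- The Toffoli gate on five qubits (bit ordering `(q1,q2,a,q3,q4)` at positions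
`0,1,2,3,4`), with controls `c1, c2` and target `t`, as a permutation matrix. -/
def toffoli5 (c1 c2 t : Fin 5) : Matrix (Fin 5 → ZMod 2) (Fin 5 → ZMod 2) ℂ :=
  Matrix.of fun i j => if i = Function.update j t (j t + j c1 * j c2) then 1 else 0

/-- The reordering isomorphism sending the five bits `(x1,x2,y,x3,x4)` to
`((x1,x2,x3,x4), y)`, separating the ancilla qubit `a` (position 2). -/
def reorder : (Fin 5 → ZMod 2) ≃ (Fin 4 → ZMod 2) × ZMod 2 where
  toFun x := (![x 0, x 1, x 3, x 4], x 2)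
  invFun p := ![p.1 0, p.1 1, p.2, p.1 2, p.1 3]
  left_inv := by decide
  right_inv := by decide

/-- Permutation matrix of a function. -/
def pmat (f : (Fin 5 → ZMod 2) → (Fin 5 → ZMod 2)) :
    Matrix (Fin 5 → ZMod 2) (Fin 5 → ZMod 2) ℂ :=
  Matrix.of fun i j => if i = f j then 1 else 0

/-- The classical function of a Toffoli gate. -/
def tfun (c1 c2 t : Fin 5) (j : Fin 5 → ZMod 2) : Fin 5 → ZMod 2 :=
  Function.update j t (j t + j c1 * j c2)

/-- The classical function of the Toffoli sandwich. -/
def Ffun : (Fin 5 → ZMod 2) → (Fin 5 → ZMod 2) :=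
  tfun 0 1 2 ∘ tfun 2 3 4 ∘ tfun 0 1 2

lemma toffoli5_eq_pmat (c1 c2 t : Fin 5) : toffoli5 c1 c2 t = pmat (tfun c1 c2 t) := rfl

lemma pmat_mul (f g : (Fin 5 → ZMod 2) → (Fin 5 → ZMod 2)) :
    pmat f * pmat g = pmat (f ∘ g) := by
  ext i j
  rw [Matrix.mul_apply, Finset.sum_eq_single (g j)]
  · simp [pmat]
  · intro k _ hk
    simp [pmat, hk]
  · simp

lemma FF : ∀ x, Ffun (Ffun x) = x := by decide

lemma F2 : ∀ x, Ffun x 2 = x 2 := by decide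

/-- There is a unitary `U` on `(ℂ²)^{⊗5}` implementing a classical reversible function
(a permutation of computational basis states) which fixes the computational-basis value of
the third qubit `a` on every basis state, yet is not of the form `V ⊗ I_a`.
A witness is `Toffoli_{q1,q2,a}; Toffoli_{a,q3,q4}; Toffoli_{q1,q2,a}`. -/
theorem stmt1 :
    ∃ U : Matrix (Fin 5 → ZMod 2) (Fin 5 → ZMod 2) ℂ,
      U ∈ Matrix.unitaryGroup (Fin 5 → ZMod 2) ℂ ∧
      U = toffoli5 0 1 2 * toffoli5 2 3 4 * toffoli5 0 1 2 ∧
      (∀ j : Fin 5 → ZMod 2, ∃ j' : Fin 5 → ZMod 2, j' 2 = j 2 ∧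
          U.mulVec (Pi.single j 1) = Pi.single j' 1) ∧
      ¬ ∃ V ∈ Matrix.unitaryGroup (Fin 4 → ZMod 2) ℂ,
          U.submatrix reorder.symm reorder.symm =
            V ⊗ₖ (1 : Matrix (ZMod 2) (ZMod 2) ℂ) := by
  refine ⟨pmat Ffun, ?_, ?_, ?_, ?_⟩
  · rw [Matrix.mem_unitaryGroup_iff]
    ext i j
    rw [Matrix.mul_apply, Finset.sum_eq_single (Ffun i)]
    · by_cases hij : i = j
      · subst hij
        simp [pmat, Matrix.star_apply, FF, Matrix.one_apply]
      · simp [pmat, Matrix.star_apply, FF, Matrix.one_apply, hij, Ne.symm hij]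
    · intro k _ hk
      have : ¬ (i = Ffun k) := fun h => hk (by rw [h, FF])
      simp [pmat, this]
    · simp
  · simp only [toffoli5_eq_pmat]; rw [pmat_mul, pmat_mul]
    rfl
  · intro j
    refine ⟨Ffun j, F2 j, ?_⟩
    ext i
    rw [Matrix.mulVec, dotProduct, Finset.sum_eq_single j]
    · simp [pmat, Pi.single_apply]
    · intro k _ hk
      simp [pmat, Pi.single_apply, hk]
    · simp
  · rintro ⟨V, -, h⟩
    rw [← Matrix.ext_iff] at h
    have h1 := h (![1,1,1,1], 0) (![1,1,1,0], 0)
    have h2 := h (![1,1,1,1], 1) (![1,1,1,0], 1)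
    rw [Matrix.submatrix_apply, Matrix.kroneckerMap_apply] at h1 h2
    have e1 : reorder.symm (![1,1,1,1], 0) = Ffun (reorder.symm (![1,1,1,0], 0)) := by decide
    have e2 : reorder.symm (![1,1,1,1], 1) ≠ Ffun (reorder.symm (![1,1,1,0], 1)) := by decide
    rw [show (pmat Ffun) (reorder.symm (![1,1,1,1], 0)) (reorder.symm (![1,1,1,0], 0)) = 1 by
      simp [pmat, e1]] at h1
    rw [show (pmat Ffun) (reorder.symm (![1,1,1,1], 1)) (reorder.symm (![1,1,1,0], 1)) = 0 by
      simp [pmat, e2]] at h2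
    rw [Matrix.one_apply_eq, mul_one] at h1 h2
    rw [← h2] at h1
    exact one_ne_zero h1
end

section
/- Let U be a unitary on ℂ² ⊗ H for a finite-dimensional Hilbert space H. Then U = I ⊗ V for some unitary V on H if and only if for every unit vector |ψ⟩ ∈ ℂ² and every unit vector |φ⟩ ∈ H there exists a unit vector |φ'⟩ ∈ H such that U(|ψ⟩ ⊗ |φ⟩) = |ψ⟩ ⊗ |φ'⟩. -/
open Matrix Kronecker

/-- Tensor product of vectors: `(ψ ⊗ φ) (i,x) = ψ i * φ x`. -/
def tens {m n : Type*} (ψ : m → ℂ) (φ : n → ℂ) : m × n → ℂ := fun p => ψ p.1 * φ p.2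

lemma dot_eq {n : Type*} [Fintype n] (w : n → ℂ) :
    star w ⬝ᵥ w = ((∑ x, ‖w x‖ ^ 2 : ℝ) : ℂ) := by
  push_cast
  simp only [dotProduct, Pi.star_apply, RCLike.star_def]
  exact Finset.sum_congr rfl fun x _ => by rw [mul_comm, Complex.mul_conj']

lemma single_unit {n : Type*} [Fintype n] [DecidableEq n] (j : n) :
    (∑ i, ‖(Pi.single j 1 : n → ℂ) i‖ ^ 2) = 1 := by
  have h : ∀ i, ‖(Pi.single j 1 : n → ℂ) i‖ ^ 2 = if i = j then 1 else 0 := by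
    intro i
    rcases eq_or_ne i j with rfl | hne
    · simp
    · simp [Pi.single_eq_of_ne hne, hne]
  rw [Finset.sum_congr rfl fun i _ => h i]
  simp

/-- A unitary `U` on `ℂ² ⊗ H` equals `I ⊗ V` for some unitary `V` on `H` iff for every
unit vector `ψ ∈ ℂ²` and every unit vector `φ ∈ H` there is a unit vector `φ'` with
`U (ψ ⊗ φ) = ψ ⊗ φ'`. -/
theorem stmt2 {d : ℕ} (U : Matrix (Fin 2 × Fin d) (Fin 2 × Fin d) ℂ)
    (hU : U ∈ Matrix.unitaryGroup (Fin 2 × Fin d) ℂ) :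
    (∃ V ∈ Matrix.unitaryGroup (Fin d) ℂ, U = (1 : Matrix (Fin 2) (Fin 2) ℂ) ⊗ₖ V) ↔
    (∀ (ψ : Fin 2 → ℂ) (φ : Fin d → ℂ), (∑ i, ‖ψ i‖ ^ 2) = 1 → (∑ x, ‖φ x‖ ^ 2) = 1 →
      ∃ φ' : Fin d → ℂ, (∑ x, ‖φ' x‖ ^ 2) = 1 ∧ U.mulVec (tens ψ φ) = tens ψ φ') := by
  constructor
  · rintro ⟨V, hV, rfl⟩ ψ φ hψ hφ
    refine ⟨V.mulVec φ, ?_, ?_⟩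
    · have h1 : star (V.mulVec φ) ⬝ᵥ (V.mulVec φ) = star φ ⬝ᵥ φ := by
        rw [Matrix.star_mulVec, Matrix.dotProduct_mulVec, Matrix.vecMul_vecMul]
        have : Vᴴ * V = 1 := Matrix.mem_unitaryGroup_iff'.mp hV
        rw [this, Matrix.vecMul_one]
      have h2 : ((∑ x, ‖(V.mulVec φ) x‖ ^ 2 : ℝ) : ℂ) = ((∑ x, ‖φ x‖ ^ 2 : ℝ) : ℂ) := by
        rw [← dot_eq, ← dot_eq, h1]
      have h3 : (∑ x, ‖(V.mulVec φ) x‖ ^ 2) = ∑ x, ‖φ x‖ ^ 2 := by exact_mod_cast h2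
      rw [h3, hφ]
    · funext p
      obtain ⟨i, x⟩ := p
      simp only [Matrix.mulVec, dotProduct, tens, Fintype.sum_prod_type,
        Matrix.kroneckerMap_apply, Matrix.one_apply, ite_mul, zero_mul]
      rw [Finset.sum_comm]
      simp only [Finset.sum_ite_eq, Finset.mem_univ, if_true]
      rw [Finset.mul_sum]
      exact Finset.sum_congr rfl fun y _ => by ring
  · intro h
    have key : ∀ (ψ : Fin 2 → ℂ), (∑ i, ‖ψ i‖ ^ 2) = 1 → ∀ y : Fin d,
        ∃ φ' : Fin d → ℂ, (∑ x, ‖φ' x‖ ^ 2) = 1 ∧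
          ∀ i x, (∑ j, U (i, x) (j, y) * ψ j) = ψ i * φ' x := by
      intro ψ hψ y
      obtain ⟨φ', h1, h2⟩ := h ψ (Pi.single y 1) hψ (single_unit y)
      refine ⟨φ', h1, fun i x => ?_⟩
      have h3 := congrFun h2 (i, x)
      simp only [Matrix.mulVec, dotProduct, tens, Fintype.sum_prod_type,
        Pi.single_apply, mul_ite, mul_one, mul_zero, Finset.sum_ite_eq, Finset.sum_ite_eq',
        Finset.mem_univ, if_true] at h3
      exact h3
    have h01 : ∀ x y, U (1, x) (0, y) = 0 := by
      intro x y
      obtain ⟨φ', -, hc⟩ := key (Pi.single 0 1) (single_unit 0) y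
      have := hc 1 x
      simpa [Pi.single_apply, mul_ite, Finset.sum_ite_eq] using this
    have h10 : ∀ x y, U (0, x) (1, y) = 0 := by
      intro x y
      obtain ⟨φ', -, hc⟩ := key (Pi.single 1 1) (single_unit 1) y
      have := hc 0 x
      simpa [Pi.single_apply, mul_ite, Finset.sum_ite_eq] using this
    have hc0 : ((Real.sqrt 2 : ℝ) : ℂ)⁻¹ ≠ 0 := by
      simp [Real.sqrt_eq_zero']
    have hdg : ∀ x y, U (0, x) (0, y) = U (1, x) (1, y) := by
      intro x y
      have hψp : (∑ i : Fin 2, ‖(fun _ : Fin 2 => ((Real.sqrt 2 : ℝ) : ℂ)⁻¹) i‖ ^ 2) = 1 := by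
        have hn : ‖(((Real.sqrt 2 : ℝ) : ℂ))⁻¹‖ ^ 2 = 2⁻¹ := by
          rw [norm_inv, Complex.norm_real, Real.norm_eq_abs,
            abs_of_nonneg (Real.sqrt_nonneg 2), inv_pow, Real.sq_sqrt (by norm_num : (2:ℝ) ≥ 0)]
        rw [Fin.sum_univ_two]
        simp only [hn]
        norm_num
      obtain ⟨φ', -, hc⟩ := key (fun _ => ((Real.sqrt 2 : ℝ) : ℂ)⁻¹) hψp y
      have e0 := hc 0 x
      have e1 := hc 1 x
      rw [Fin.sum_univ_two, h10 x y] at e0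
      rw [Fin.sum_univ_two, h01 x y] at e1
      simp only [add_zero, zero_mul, zero_add] at e0 e1
      have := e0.trans e1.symm
      exact mul_right_cancel₀ hc0 this
    refine ⟨Matrix.of fun x y => U (0, x) (0, y), ?_, ?_⟩
    · rw [Matrix.mem_unitaryGroup_iff']
      have hu := Matrix.mem_unitaryGroup_iff'.mp hU
      ext x y
      have h4 := congrFun (congrFun hu ((0 : Fin 2), x)) ((0 : Fin 2), y)
      simp only [Matrix.mul_apply, Matrix.conjTranspose_apply, Matrix.star_eq_conjTranspose,
        Fintype.sum_prod_type, Fin.sum_univ_two, h01, star_zero, zero_mul,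
        Finset.sum_const_zero, add_zero, Matrix.one_apply, Prod.mk.injEq, true_and] at h4
      simp only [Matrix.mul_apply, Matrix.conjTranspose_apply, Matrix.star_eq_conjTranspose,
        Matrix.of_apply, Matrix.one_apply]
      exact h4
    · ext p q
      obtain ⟨i, x⟩ := p
      obtain ⟨j, y⟩ := q
      fin_cases i <;> fin_cases j <;>
        simp [Matrix.one_apply, h01 x y, h10 x y, hdg x y]
end

section
/- Let H, K be finite-dimensional complex Hilbert spaces and let A : ℂ² ⊗ H → ℂ² ⊗ K be a linear map such that for every vector |ψ⟩ ∈ ℂ² and every |φ⟩ ∈ H there exists a vector |φ_{ψ,φ}⟩ ∈ K with A(|ψ⟩ ⊗ |φ⟩) = |ψ⟩ ⊗ |φ_{ψ,φ}⟩. Then there exists a linear map B : H → K such that A = I_{ℂ²} ⊗ B. -/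
open Matrix Kronecker

/-- If a linear map `A : ℂ² ⊗ H → ℂ² ⊗ K` sends every product vector `ψ ⊗ φ` (for *all*
`ψ ∈ ℂ²`, not just basis states) to a vector of the form `ψ ⊗ φ'`, then `A = I ⊗ B`
for some linear map `B : H → K`. -/
theorem stmt3 {h k : ℕ} (A : Matrix (Fin 2 × Fin k) (Fin 2 × Fin h) ℂ)
    (hA : ∀ (ψ : Fin 2 → ℂ) (φ : Fin h → ℂ), ∃ φ' : Fin k → ℂ,
      A.mulVec (tens ψ φ) = tens ψ φ') :
    ∃ B : Matrix (Fin k) (Fin h) ℂ, A = (1 : Matrix (Fin 2) (Fin 2) ℂ) ⊗ₖ B := by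
  classical
  have key : ∀ (ψ : Fin 2 → ℂ) (x : Fin h), ∃ φ' : Fin k → ℂ,
      ∀ a j, A (a,j) (0,x) * ψ 0 + A (a,j) (1,x) * ψ 1 = ψ a * φ' j := by
    intro ψ x
    obtain ⟨φ', hφ'⟩ := hA ψ (Pi.single x 1)
    refine ⟨φ', fun a j => ?_⟩
    have := congrFun hφ' (a,j)
    simpa [Matrix.mulVec, dotProduct, tens, Fintype.sum_prod_type,
      Pi.single_apply, mul_ite, mul_zero, mul_one, Fin.sum_univ_two,
      Finset.sum_ite_eq', mul_comm, mul_assoc, mul_left_comm] using this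
  refine ⟨fun j x => A (0,j) (0,x), ?_⟩
  ext ⟨a,j⟩ ⟨b,x⟩
  obtain ⟨φ0, h0⟩ := key ![1,0] x
  obtain ⟨φ1, h1⟩ := key ![0,1] x
  obtain ⟨φs, hs⟩ := key ![1,1] x
  have e00 : A (0,j) (0,x) = φ0 j := by simpa using h0 0 j
  have e10 : A (1,j) (0,x) = 0 := by simpa using h0 1 j
  have e01 : A (0,j) (1,x) = 0 := by simpa using h1 0 j
  have e11 : A (1,j) (1,x) = φ1 j := by simpa using h1 1 j
  have s0 : A (0,j) (0,x) + A (0,j) (1,x) = φs j := by simpa using hs 0 j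
  have s1 : A (1,j) (0,x) + A (1,j) (1,x) = φs j := by simpa using hs 1 j
  have ediag : A (1,j) (1,x) = A (0,j) (0,x) := by
    rw [e01, add_zero] at s0; rw [e10, zero_add] at s1; rw [s1, s0]
  fin_cases a <;> fin_cases b <;>
    simp [Matrix.kroneckerMap_apply, Matrix.kroneckerMap, Matrix.one_apply, e10, e01, ediag]
end

section
/- Let U be a 2n×2n permutation matrix (a 0-1 unitary), written in block form U = [[A, B],[C, D]] with n×n blocks. Suppose: (i) the trace of the (2,2)-block of U(|0⟩⟨0| ⊗ I_n)U† is 0, i.e., Tr(CC†) = 0; and (ii) the traces of the blocks of U(|+⟩⟨+| ⊗ I_n)U† satisfy Tr((A+B)(A+B)†) = Tr((A+B)(C+D)†) = Tr((C+D)(A+B)†) = Tr((C+D)(C+D)†) = n. Then B = 0, C = 0, and A = D, so U = I₂ ⊗ A. -/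
open Matrix Kronecker

private lemma sum01 {α : Type*} [Fintype α] (f : α → ℂ)
    (hf : ∀ a, f a = 0 ∨ f a = 1) (h : ∑ a, f a = 0) :
    ∀ a, f a = 0 := by
  have hre : ∑ a, (f a).re = 0 := by
    rw [← Complex.re_sum, h, Complex.zero_re]
  have hnn : ∀ a ∈ Finset.univ, 0 ≤ (f a).re := by
    intro a _; rcases hf a with h' | h' <;> simp [h']
  intro a
  have h0 := (Finset.sum_eq_zero_iff_of_nonneg hnn).mp hre a (Finset.mem_univ a)
  rcases hf a with h' | h'
  · exact h'
  · rw [h'] at h0; simp at h0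

/-- Let `U` be a `2n×2n` permutation matrix (a 0-1 matrix with exactly one 1 in each row
and column), in block form `U = [[A,B],[C,D]]`. If `Tr(CC†) = 0` and
`Tr((A+B)(A+B)†) = Tr((A+B)(C+D)†) = Tr((C+D)(A+B)†) = Tr((C+D)(C+D)†) = n`,
then `B = 0`, `C = 0`, `A = D`, and `U = I₂ ⊗ A`. -/
theorem stmt6 {n : ℕ} (U : Matrix (Fin 2 × Fin n) (Fin 2 × Fin n) ℂ)
    (h01 : ∀ i j, U i j = 0 ∨ U i j = 1)
    (hrow : ∀ i, ∃! j, U i j = 1)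
    (hcol : ∀ j, ∃! i, U i j = 1)
    (A B C D : Matrix (Fin n) (Fin n) ℂ)
    (hA : ∀ i j, A i j = U (0, i) (0, j)) (hB : ∀ i j, B i j = U (0, i) (1, j))
    (hC : ∀ i j, C i j = U (1, i) (0, j)) (hD : ∀ i j, D i j = U (1, i) (1, j))
    (h0 : (C * Cᴴ).trace = 0)
    (h1 : ((A + B) * (A + B)ᴴ).trace = (n : ℂ))
    (h2 : ((A + B) * (C + D)ᴴ).trace = (n : ℂ))
    (h3 : ((C + D) * (A + B)ᴴ).trace = (n : ℂ))
    (h4 : ((C + D) * (C + D)ᴴ).trace = (n : ℂ)) :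
    B = 0 ∧ C = 0 ∧ A = D ∧ U = (1 : Matrix (Fin 2) (Fin 2) ℂ) ⊗ₖ A := by
  have hA01 : ∀ i j, A i j = 0 ∨ A i j = 1 := fun i j => by rw [hA]; exact h01 _ _
  have hB01 : ∀ i j, B i j = 0 ∨ B i j = 1 := fun i j => by rw [hB]; exact h01 _ _
  have hC01 : ∀ i j, C i j = 0 ∨ C i j = 1 := fun i j => by rw [hC]; exact h01 _ _
  have hD01 : ∀ i j, D i j = 0 ∨ D i j = 1 := fun i j => by rw [hD]; exact h01 _ _
  -- Step 1 : C = 0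
  have htr0 : ∑ p : Fin n × Fin n, C p.1 p.2 * star (C p.1 p.2) = 0 := by
    rw [← h0]
    simp [Matrix.trace, Matrix.mul_apply, Matrix.conjTranspose_apply, Matrix.diag,
      Fintype.sum_prod_type]
  have hC0 : ∀ i j, C i j = 0 := by
    intro i j
    have := sum01 (fun p : Fin n × Fin n => C p.1 p.2 * star (C p.1 p.2))
      (fun p => by rcases hC01 p.1 p.2 with h | h <;> simp [h]) htr0 (i, j)
    simp only [mul_eq_zero] at this
    rcases this with h | h
    · exact h
    · rcases hC01 i j with h' | h'
      · exact h'
      · rw [h'] at h; simp at h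
  have hCzero : C = 0 := by ext i j; exact hC0 i j
  -- Step 2 : the lower rows have their one in D : define σ
  have hσex : ∀ i, ∃ j, D i j = 1 ∧ ∀ j', D i j' = 1 → j' = j := by
    intro i
    obtain ⟨⟨a, j⟩, hc, hcu⟩ := hrow (1, i)
    have ha : a = 0 ∨ a = 1 := by omega
    rcases ha with ha | ha <;> subst ha
    · exfalso; rw [← hC i j, hC0 i j] at hc; exact zero_ne_one hc
    · refine ⟨j, by rw [hD]; exact hc, fun j' hj' => ?_⟩
      have := hcu (1, j') (by show U _ _ = 1; rw [← hD]; exact hj')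
      exact (Prod.mk.injEq _ _ _ _ ▸ this).2
  choose σ hσ1 hσ2 using hσex
  -- D row sums are 1
  have hDrow : ∀ i, ∑ j, D i j = 1 := by
    intro i
    rw [Finset.sum_eq_single (σ i)]
    · exact hσ1 i
    · intro j _ hj
      rcases hD01 i j with h | h
      · exact h
      · exact absurd (hσ2 i j h) hj
    · simp
  -- h2 rewritten
  have h2' : ∑ p : Fin n × Fin n, (A p.1 p.2 + B p.1 p.2) * star (D p.1 p.2) = (n : ℂ) := by
    rw [← h2, hCzero, zero_add]
    simp [Matrix.trace, Matrix.mul_apply, Matrix.conjTranspose_apply, Matrix.diag,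
      Fintype.sum_prod_type, Matrix.add_apply]
  -- A+B entries are 0 or 1 (not 2): row uniqueness
  have hAB01 : ∀ i j, A i j + B i j = 0 ∨ A i j + B i j = 1 := by
    intro i j
    rcases hA01 i j with ha | ha <;> rcases hB01 i j with hb | hb
    · left; rw [ha, hb, add_zero]
    · right; rw [ha, hb, zero_add]
    · right; rw [ha, hb, add_zero]
    · exfalso
      obtain ⟨c, _, hcu⟩ := hrow (0, i)
      have e1 := hcu (0, j) (by show U _ _ = 1; rw [← hA]; exact ha)
      have e2 := hcu (1, j) (by show U _ _ = 1; rw [← hB]; exact hb)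
      rw [← e2] at e1
      exact absurd e1 (by simp)
  -- counting: when D i j = 1, A i j + B i j = 1
  have hkey : ∀ i j, D i j = 1 → A i j + B i j = 1 := by
    have hsum : ∑ p : Fin n × Fin n,
        (D p.1 p.2 - (A p.1 p.2 + B p.1 p.2) * star (D p.1 p.2)) = 0 := by
      rw [Finset.sum_sub_distrib, h2']
      have : ∑ p : Fin n × Fin n, D p.1 p.2 = (n : ℂ) := by
        rw [Fintype.sum_prod_type]
        simp [hDrow]
      rw [this, sub_self]
    have hterm : ∀ p : Fin n × Fin n,
        (D p.1 p.2 - (A p.1 p.2 + B p.1 p.2) * star (D p.1 p.2)) = 0 ∨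
        (D p.1 p.2 - (A p.1 p.2 + B p.1 p.2) * star (D p.1 p.2)) = 1 := by
      intro p
      rcases hD01 p.1 p.2 with h | h
      · left; rw [h]; simp
      · rw [h]
        rcases hAB01 p.1 p.2 with h' | h' <;> rw [h'] <;> simp
    intro i j hDij
    have := sum01 _ hterm hsum (i, j)
    simp only [hDij] at this
    simpa using sub_eq_zero.mp this |>.symm
  -- B i (σ i) = 0 hence A i (σ i) = 1
  have hAσ : ∀ i, A i (σ i) = 1 := by
    intro i
    have hBσ : B i (σ i) = 0 := by
      rcases hB01 i (σ i) with h | h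
      · exact h
      · exfalso
        obtain ⟨r, _, hru⟩ := hcol (1, σ i)
        have e1 := hru (0, i) (by show U _ _ = 1; rw [← hB]; exact h)
        have e2 := hru (1, i) (by show U _ _ = 1; rw [← hD]; exact hσ1 i)
        rw [← e2] at e1
        exact absurd (congrArg Prod.fst e1) (by simp)
    have := hkey i (σ i) (hσ1 i)
    rwa [hBσ, add_zero] at this
  -- row (0,i) uniqueness gives B = 0 and characterizes A
  have hArow : ∀ i j, A i j = 1 ↔ j = σ i := by
    intro i j
    constructor
    · intro h
      obtain ⟨c, _, hcu⟩ := hrow (0, i)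
      have e1 := hcu (0, j) (by show U _ _ = 1; rw [← hA]; exact h)
      have e2 := hcu (0, σ i) (by show U _ _ = 1; rw [← hA]; exact hAσ i)
      rw [← e2] at e1
      exact (Prod.mk.injEq _ _ _ _ ▸ e1).2
    · intro h; rw [h]; exact hAσ i
  have hBzero : B = 0 := by
    ext i j
    rcases hB01 i j with h | h
    · simpa using h
    · exfalso
      obtain ⟨c, _, hcu⟩ := hrow (0, i)
      have e1 := hcu (1, j) (by show U _ _ = 1; rw [← hB]; exact h)
      have e2 := hcu (0, σ i) (by show U _ _ = 1; rw [← hA]; exact hAσ i)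
      rw [← e2] at e1
      exact absurd (congrArg Prod.fst e1) (by simp)
  have hAD : A = D := by
    ext i j
    rcases hA01 i j with ha | ha
    · rcases hD01 i j with hd | hd
      · rw [ha, hd]
      · exfalso
        have := hσ2 i j hd
        rw [← hArow i j] at this
        rw [ha] at this; exact zero_ne_one this
    · have hj := (hArow i j).mp ha
      rw [ha, hj, hσ1 i]
  refine ⟨hBzero, hCzero, hAD, ?_⟩
  ext ⟨a, i⟩ ⟨b, j⟩
  have ha : a = 0 ∨ a = 1 := by omega
  have hb : b = 0 ∨ b = 1 := by omega
  rcases ha with ha | ha <;> rcases hb with hb | hb <;> subst ha <;> subst hb <;>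
    simp only [kroneckerMap_apply, Matrix.one_apply]
  · simp [← hA]
  · simp [← hB, hBzero]
  · simp [← hC, hCzero]
  · simp [← hD, hAD]
end

section
/- Let f be a permutation of {0,1}^n × {0,1} and let U_f be the induced permutation unitary on (ℂ²)^{⊗n} ⊗ ℂ² (mapping basis state |x⟩|b⟩ to |f(x,b)⟩). Then U_f = V ⊗ I₂ for some unitary V on (ℂ²)^{⊗n} if and only if both of the following hold: (a) for every x, U_f(|x⟩ ⊗ |0⟩) = |x'⟩ ⊗ |0⟩ for some x'; and (b) for every x, U_f(|x⟩ ⊗ (|0⟩+|1⟩)) = |x'⟩ ⊗ (|0⟩+|1⟩) for some x'. -/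
open Matrix Kronecker

def permMat {α : Type*} [DecidableEq α] (f : α ≃ α) : Matrix α α ℂ :=
  Matrix.of fun i j => if i = f j then 1 else 0

lemma permMat_mulVec {α : Type*} [DecidableEq α] [Fintype α] (f : α ≃ α) (j : α) :
    (permMat f).mulVec (Pi.single j 1) = Pi.single (f j) 1 := by
  funext i
  simp [permMat, Matrix.mulVec, dotProduct, Pi.single_apply]

lemma single_inj {α : Type*} [DecidableEq α] {a b : α}
    (h : (Pi.single a 1 : α → ℂ) = Pi.single b 1) : a = b := by
  have := congrFun h a
  by_contra hne
  simp [Pi.single_apply, hne] at this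

lemma single_apply_eq_one {α : Type*} [DecidableEq α] {a b : α}
    (h : (Pi.single a 1 : α → ℂ) b = 1) : b = a := by
  by_contra hne
  rw [Pi.single_eq_of_ne hne] at h
  exact zero_ne_one h

/-- For the permutation unitary `U_f` on `(ℂ²)^{⊗n} ⊗ ℂ²` induced by a permutation `f`
of `{0,1}ⁿ × {0,1}`: `U_f = V ⊗ I₂` for some unitary `V` iff
(a) every `|x⟩ ⊗ |0⟩` is mapped to some `|x'⟩ ⊗ |0⟩`, and
(b) every `|x⟩ ⊗ (|0⟩+|1⟩)` is mapped to some `|x'⟩ ⊗ (|0⟩+|1⟩)`. -/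
theorem stmt8 {n : ℕ} (f : ((Fin n → Bool) × Bool) ≃ ((Fin n → Bool) × Bool)) :
    (∃ V ∈ Matrix.unitaryGroup (Fin n → Bool) ℂ,
        permMat f = V ⊗ₖ (1 : Matrix Bool Bool ℂ)) ↔
    ((∀ x : Fin n → Bool, ∃ x' : Fin n → Bool,
        (permMat f).mulVec (Pi.single (x, false) 1) = Pi.single (x', false) 1) ∧
     (∀ x : Fin n → Bool, ∃ x' : Fin n → Bool,
        (permMat f).mulVec (Pi.single (x, false) 1 + Pi.single (x, true) 1) =
          Pi.single (x', false) 1 + Pi.single (x', true) 1)) := by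
  constructor
  · rintro ⟨V, hVu, hV⟩
    have hent : ∀ (i j : Fin n → Bool) (a b : Bool),
        (if (i, a) = f (j, b) then (1 : ℂ) else 0) = V i j * (if a = b then 1 else 0) := by
      intro i j a b
      have := congrFun (congrFun hV (i, a)) (j, b)
      simpa [permMat, Matrix.kroneckerMap_apply, Matrix.one_apply] using this
    have hsnd : ∀ (j : Fin n → Bool) (b : Bool), (f (j, b)).2 = b := by
      intro j b
      have h := hent (f (j, b)).1 j (f (j, b)).2 b
      by_contra hne
      simp [hne] at h
    have hVval : ∀ (j : Fin n → Bool) (b : Bool), V ((f (j, b)).1) j = 1 := by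
      intro j b
      have h := hent (f (j, b)).1 j b b
      have hc : ((f (j, b)).1, b) = f (j, b) := Prod.ext_iff.mpr ⟨rfl, (hsnd j b).symm⟩
      rw [if_pos hc] at h
      rw [if_pos rfl, mul_one] at h
      exact h.symm
    have hfst : ∀ (j : Fin n → Bool), (f (j, true)).1 = (f (j, false)).1 := by
      intro j
      have h := hent (f (j, false)).1 j true true
      rw [hVval j false, if_pos rfl, one_mul] at h
      have heq : ((f (j, false)).1, true) = f (j, true) := by
        by_contra hne
        rw [if_neg hne] at h
        exact zero_ne_one h
      exact (congrArg Prod.fst heq).symm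
    have hf0 : ∀ x, f (x, false) = ((f (x, false)).1, false) := by
      intro x
      exact Prod.ext_iff.mpr ⟨rfl, hsnd x false⟩
    have hf1 : ∀ x, f (x, true) = ((f (x, false)).1, true) := by
      intro x
      exact Prod.ext_iff.mpr ⟨hfst x, hsnd x true⟩
    constructor
    · intro x
      exact ⟨(f (x, false)).1, by rw [permMat_mulVec, hf0 x]⟩
    · intro x
      exact ⟨(f (x, false)).1, by
        rw [Matrix.mulVec_add, permMat_mulVec, permMat_mulVec, hf0 x, hf1 x]⟩
  · rintro ⟨ha, hb⟩
    set g : (Fin n → Bool) → (Fin n → Bool) := fun x => (f (x, false)).1 with hgdef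
    have hg0 : ∀ x, f (x, false) = (g x, false) := by
      intro x
      obtain ⟨x', hx'⟩ := ha x
      rw [permMat_mulVec] at hx'
      have h := single_inj hx'
      rw [hgdef]
      simp only [h]
    have hg1 : ∀ x, f (x, true) = (g x, true) := by
      intro x
      obtain ⟨x'', hx''⟩ := hb x
      rw [Matrix.mulVec_add, permMat_mulVec, permMat_mulVec, hg0 x] at hx''
      have hx1 : (x'', true) = f (x, true) := by
        have h1 := congrFun hx'' (x'', true)
        rw [Pi.add_apply, Pi.add_apply,
          Pi.single_eq_of_ne (by simp [Prod.ext_iff] : ((x'', true) : _) ≠ (g x, false)),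
          Pi.single_eq_of_ne (by simp [Prod.ext_iff] : ((x'', true) : _) ≠ (x'', false)),
          Pi.single_eq_same, zero_add, zero_add] at h1
        exact single_apply_eq_one h1
      rw [← hx1] at hx''
      have h2 := congrFun hx'' (g x, false)
      rw [Pi.add_apply, Pi.add_apply, Pi.single_eq_same,
        Pi.single_eq_of_ne (by simp [Prod.ext_iff] : ((g x, false) : _) ≠ (x'', true)),
        add_zero, add_zero] at h2
      have h3 := single_apply_eq_one h2.symm
      have h4 : g x = x'' := congrArg Prod.fst h3
      rw [← hx1, ← h4]
    have hginj : Function.Injective g := by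
      intro x y h
      have : f (x, false) = f (y, false) := by rw [hg0, hg0, h]
      exact (Prod.ext_iff.mp (f.injective this)).1
    refine ⟨Matrix.of fun i j => if i = g j then (1 : ℂ) else 0, ?_, ?_⟩
    · rw [Matrix.mem_unitaryGroup_iff']
      ext i j
      simp only [Matrix.mul_apply, Matrix.star_apply, Matrix.of_apply,
        apply_ite (star : ℂ → ℂ), star_one, star_zero, Matrix.one_apply]
      rw [Finset.sum_eq_single (g i)]
      · by_cases h : i = j
        · simp [h]
        · simp [h, hginj.ne h]
      · intro k _ hk
        simp [hk]
      · simp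
    · ext ⟨i, a⟩ ⟨j, b⟩
      cases b <;>
        simp [permMat, Matrix.kroneckerMap_apply, Matrix.one_apply, hg0, hg1, Prod.ext_iff,
          ite_and] <;> cases a <;> simp
end

section
/- Let E be a quantum channel (completely positive trace-preserving map) on M₂(ℂ) ⊗ M_d(ℂ) with Kraus operators {E_k}. Suppose that for every orthonormal basis vector |i⟩ of ℂ^d (where the M_d factor is the 'other qubits' system), the channel E ⊗ id on an additional qubit q' satisfies (E ⊗ id)(|i⟩⟨i| ⊗ |Φ⟩⟨Φ|) = ρ_i ⊗ |Φ⟩⟨Φ| for some state ρ_i, where |Φ⟩ = (|00⟩+|11⟩)/√2 is the Bell state between the first qubit and q'. Then every Kraus operator satisfies E_k = E'_k ⊗ I₂ for some operator E'_k on ℂ^d, and hence E = E' ⊗ id₂ for a channel E' on M_d(ℂ). -/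
open Matrix Kronecker ComplexOrder

/-- Extension `M ⊗ I₂` of an operator `M` on `ℂ^d ⊗ ℂ²` (system ⊗ dirty qubit `q`) by the
identity on the additional qubit `q'`; the total space has index `Fin d × Fin 2 × Fin 2`
(system, `q`, `q'`). -/
def extOp {d : ℕ} (M : Matrix (Fin d × Fin 2) (Fin d × Fin 2) ℂ) :
    Matrix (Fin d × Fin 2 × Fin 2) (Fin d × Fin 2 × Fin 2) ℂ :=
  Matrix.of fun p q => M (p.1, p.2.1) (q.1, q.2.1) * (if p.2.2 = q.2.2 then 1 else 0)

/-- The state `|i⟩⟨i| ⊗ |Φ⟩⟨Φ|`, where `|Φ⟩ = (|00⟩+|11⟩)/√2` is the Bell state of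
qubits `q` and `q'`. -/
noncomputable def inState {d : ℕ} (i : Fin d) :
    Matrix (Fin d × Fin 2 × Fin 2) (Fin d × Fin 2 × Fin 2) ℂ :=
  Matrix.of fun p q =>
    if p.1 = i ∧ q.1 = i ∧ p.2.1 = p.2.2 ∧ q.2.1 = q.2.2 then (1 / 2 : ℂ) else 0

/-- The state `ρ ⊗ |Φ⟩⟨Φ|`, with `ρ` a state of the system `ℂ^d` and `|Φ⟩` the Bell state
of qubits `q` and `q'`. -/
noncomputable def outState {d : ℕ} (ρ : Matrix (Fin d) (Fin d) ℂ) :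
    Matrix (Fin d × Fin 2 × Fin 2) (Fin d × Fin 2 × Fin 2) ℂ :=
  Matrix.of fun p q =>
    ρ p.1 q.1 * (if p.2.1 = p.2.2 ∧ q.2.1 = q.2.2 then (1 / 2 : ℂ) else 0)

lemma entry9 {d : ℕ} (M : Matrix (Fin d × Fin 2) (Fin d × Fin 2) ℂ) (i : Fin d)
    (p q : Fin d × Fin 2 × Fin 2) :
    (extOp M * inState i * (extOp M)ᴴ) p q
      = M (p.1, p.2.1) (i, p.2.2) * star (M (q.1, q.2.1) (i, q.2.2)) * (1/2) := by
  simp only [Matrix.mul_apply, Matrix.conjTranspose_apply, extOp, inState, Matrix.of_apply,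
    Fintype.sum_prod_type]
  simp [Finset.mul_sum, Finset.sum_mul, mul_ite, ite_mul, ite_and, apply_ite (starRingEnd ℂ)]
  ring

lemma sum_mul_conj9 {m : ℕ} (z : Fin m → ℂ) (h : ∑ k, z k * star (z k) = 0) :
    ∀ k, z k = 0 := by
  intro k
  have h' : ∑ k, (Complex.normSq (z k) : ℂ) = 0 := by
    simpa [Complex.mul_conj] using h
  have h'' : ∑ k, Complex.normSq (z k) = 0 := by exact_mod_cast h'
  have := (Finset.sum_eq_zero_iff_of_nonneg
    (fun k _ => Complex.normSq_nonneg (z k))).mp h'' k (Finset.mem_univ k)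
  exact Complex.normSq_eq_zero.mp this

/-- If a quantum channel on `M_d(ℂ) ⊗ M₂(ℂ)` with Kraus operators `E_k` satisfies
`(E ⊗ id)(|i⟩⟨i| ⊗ |Φ⟩⟨Φ|) = ρ_i ⊗ |Φ⟩⟨Φ|` for every computational basis vector `|i⟩`
of the system and some states `ρ_i`, then each Kraus operator factors as `E_k = E'_k ⊗ I₂`,
and the `E'_k` form a Kraus family for a channel `E'` on `M_d(ℂ)`. -/
theorem stmt9 {d m : ℕ} (E : Fin m → Matrix (Fin d × Fin 2) (Fin d × Fin 2) ℂ)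
    (hKraus : ∑ k, (E k)ᴴ * E k = 1)
    (hfix : ∀ i : Fin d, ∃ ρ : Matrix (Fin d) (Fin d) ℂ, ρ.PosSemidef ∧ ρ.trace = 1 ∧
      (∑ k, extOp (E k) * inState i * (extOp (E k))ᴴ) = outState ρ) :
    ∃ F : Fin m → Matrix (Fin d) (Fin d) ℂ,
      (∑ k, (F k)ᴴ * F k = 1) ∧
      ∀ k, E k = F k ⊗ₖ (1 : Matrix (Fin 2) (Fin 2) ℂ) := by
  set F : Fin m → Matrix (Fin d) (Fin d) ℂ :=
    fun k => Matrix.of fun a i => E k (a, 0) (i, 0) with hF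
  have key : ∀ (i : Fin d) (k) (a : Fin d) (b c : Fin 2),
      E k (a, b) (i, c) = F k a i * (if b = c then 1 else 0) := by
    intro i
    obtain ⟨ρ, hpsd, htr, hsum⟩ := hfix i
    have hEq : ∀ p q : Fin d × Fin 2 × Fin 2,
        ∑ k, E k (p.1, p.2.1) (i, p.2.2) * star (E k (q.1, q.2.1) (i, q.2.2)) * (1/2)
          = outState ρ p q := by
      intro p q
      have := congrFun (congrFun hsum p) q
      simpa [Matrix.sum_apply, entry9] using this
    -- Step A: off-diagonal (in q,q') entries vanish
    have hA : ∀ (k) (a : Fin d) (b c : Fin 2), b ≠ c → E k (a, b) (i, c) = 0 := by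
      intro k a b c hbc
      refine sum_mul_conj9 (fun k => E k (a, b) (i, c)) ?_ k
      have h := hEq (a, b, c) (a, b, c)
      simp only [outState, Matrix.of_apply] at h
      rw [if_neg (by simp [hbc]), mul_zero] at h
      have h2 : (∑ k, E k (a, b) (i, c) * star (E k (a, b) (i, c))) * (1/2) = 0 := by
        rw [Finset.sum_mul]; exact h
      field_simp at h2
      rw [mul_zero] at h2
      exact h2
    -- Step B: diagonal entries agree
    have hB : ∀ (k) (a : Fin d), E k (a, 1) (i, 1) = E k (a, 0) (i, 0) := by
      intro k a
      have := sum_mul_conj9 (fun k => E k (a, 0) (i, 0) - E k (a, 1) (i, 1)) ?_ k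
      · linear_combination -this
      · have h00 := hEq (a, 0, 0) (a, 0, 0)
        have h01 := hEq (a, 0, 0) (a, 1, 1)
        have h10 := hEq (a, 1, 1) (a, 0, 0)
        have h11 := hEq (a, 1, 1) (a, 1, 1)
        simp only [outState, Matrix.of_apply] at h00 h01 h10 h11
        rw [if_pos (by simp)] at h00 h01 h10 h11
        have expand : ∑ k, (E k (a, 0) (i, 0) - E k (a, 1) (i, 1)) *
            star (E k (a, 0) (i, 0) - E k (a, 1) (i, 1))
            = 2 * ((∑ k, E k (a,0) (i,0) * star (E k (a,0) (i,0)) * (1/2))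
              - (∑ k, E k (a,0) (i,0) * star (E k (a,1) (i,1)) * (1/2))
              - (∑ k, E k (a,1) (i,1) * star (E k (a,0) (i,0)) * (1/2))
              + (∑ k, E k (a,1) (i,1) * star (E k (a,1) (i,1)) * (1/2))) := by
          rw [← Finset.sum_sub_distrib, ← Finset.sum_sub_distrib,
            ← Finset.sum_add_distrib, Finset.mul_sum]
          refine Finset.sum_congr rfl fun k _ => by
            simp only [star_sub]; ring
        rw [expand, h00, h01, h10, h11]
        ring
    intro k a b c
    fin_cases b <;> fin_cases c <;>
      simp [hF, hA, hB, Fin.ext_iff, (by norm_num : (0:Fin 2) ≠ 1), (by norm_num : (1:Fin 2) ≠ 0)]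
  refine ⟨F, ?_, fun k => ?_⟩
  · ext a i
    have h := congrFun (congrFun hKraus (a, 0)) (i, 0)
    simp only [Matrix.sum_apply, Matrix.mul_apply, Matrix.conjTranspose_apply,
      Fintype.sum_prod_type, Matrix.one_apply, Prod.mk.injEq] at h ⊢
    have hL : ∀ k, ∀ j : Fin d, ∑ s : Fin 2,
        star (E k (j, s) (a, 0)) * E k (j, s) (i, 0)
        = star (F k j a) * F k j i := by
      intro k j
      rw [Fin.sum_univ_two, key a k j 0 0, key i k j 0 0, key a k j 1 0, key i k j 1 0]
      simp
    calc (∑ k, ∑ j, star (F k j a) * F k j i)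
        = ∑ k, ∑ j, ∑ s : Fin 2, star (E k (j, s) (a, 0)) * E k (j, s) (i, 0) := by
          refine Finset.sum_congr rfl fun k _ => Finset.sum_congr rfl fun j _ => (hL k j).symm
      _ = if a = i then 1 else 0 := by
          rw [h]; by_cases hai : a = i <;> simp [hai]
  · ext ⟨a, b⟩ ⟨j, c⟩
    simp [Matrix.kroneckerMap_apply, Matrix.one_apply, key j k a b c]
end
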